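/- arXiv:1206.0260 — 3 statements merged into one kernel-verified Lean document; each statement's English description precedes it below -/
import Mathlib

section
/- Let g(x) be a monic polynomial of degree n - k2 dividing x^n - 1 over F_2, where k2 > ⌈n/2⌉. Then the orbit of g(x) under multiplication by x in F_2[x]/(x^n - 1) has size exactly n; equivalently, the n cyclic shifts of the coefficient vector of g(x) are pairwise distinct. -/
open Polynomial

abbrev CycRing (n : ℕ) : Type :=
  Polynomial (ZMod 2) ⧸ Ideal.span {(X : Polynomial (ZMod 2)) ^ n - 1}

noncomputable abbrev cycMk (n : ℕ) : Polynomial (ZMod 2) →+* CycRing n :=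
  Ideal.Quotient.mk (Ideal.span {(X : Polynomial (ZMod 2)) ^ n - 1})

/-- Let `g` be a monic polynomial of degree `n - k₂` dividing `xⁿ - 1` over `F₂`,
where `k₂ > ⌈n/2⌉`.  Then the orbit of `g` under multiplication by `x` in
`F₂[x]/(xⁿ - 1)` has size exactly `n`; equivalently, the `n` cyclic shifts
`x^i · g(x)`, `0 ≤ i < n`, are pairwise distinct. -/
theorem stmt2 (n k₂ : ℕ) (hn : 0 < n) (hk₂n : k₂ ≤ n) (hk₂ : (n + 1) / 2 < k₂)
    (g : Polynomial (ZMod 2)) (hgmonic : g.Monic)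
    (hgdvd : g ∣ (X : Polynomial (ZMod 2)) ^ n - 1)
    (hgdeg : g.natDegree = n - k₂) :
    Nat.card {y : CycRing n | ∃ a : ℕ, (cycMk n X) ^ a * cycMk n g = y} = n ∧
      ∀ i j : Fin n, (cycMk n X) ^ (i : ℕ) * cycMk n g = (cycMk n X) ^ (j : ℕ) * cycMk n g →
        i = j := by
  have hg0 : g ≠ 0 := hgmonic.ne_zero
  obtain ⟨h, heq⟩ := hgdvd
  have hXn : ((X : Polynomial (ZMod 2)) ^ n - 1) ≠ 0 := by
    have := monic_X_pow_sub_C (1 : ZMod 2) hn.ne'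
    simpa using this.ne_zero
  have h0 : h ≠ 0 := by
    intro hc; rw [hc, mul_zero] at heq; exact hXn heq
  have hdegXn : ((X : Polynomial (ZMod 2)) ^ n - 1).natDegree = n := by
    have := natDegree_X_pow_sub_C (n := n) (r := (1 : ZMod 2))
    simpa using this
  have hdegh : h.natDegree = k₂ := by
    have := natDegree_mul hg0 h0
    rw [← heq, hdegXn, hgdeg] at this
    omega
  -- x^n = 1 in the quotient
  have hxn : (cycMk n X) ^ n = 1 := by
    have hmem : ((X : Polynomial (ZMod 2)) ^ n - 1) ∈
        Ideal.span {(X : Polynomial (ZMod 2)) ^ n - 1} :=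
      Ideal.subset_span rfl
    have h0 : cycMk n ((X : Polynomial (ZMod 2)) ^ n - 1) = 0 :=
      Ideal.Quotient.eq_zero_iff_mem.mpr hmem
    rw [map_sub, map_pow, map_one, sub_eq_zero] at h0
    exact h0
  -- key divisibility lemma
  have L2 : ∀ m : ℕ, (cycMk n X) ^ m * cycMk n g = cycMk n g →
      h ∣ (X : Polynomial (ZMod 2)) ^ m - 1 := by
    intro m hm
    have hz : cycMk n ((X : Polynomial (ZMod 2)) ^ m * g - g) = 0 := by
      rw [map_sub, map_mul, map_pow, hm, sub_self]
    have hdvd : ((X : Polynomial (ZMod 2)) ^ n - 1) ∣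
        ((X : Polynomial (ZMod 2)) ^ m * g - g) :=
      Ideal.mem_span_singleton.mp (Ideal.Quotient.eq_zero_iff_mem.mp hz)
    have hfac : (X : Polynomial (ZMod 2)) ^ m * g - g = g * ((X : Polynomial (ZMod 2)) ^ m - 1) := by
      ring
    rw [hfac, heq] at hdvd
    exact (mul_dvd_mul_iff_left hg0).mp hdvd
  have L3 : ∀ m : ℕ, 0 < m → (cycMk n X) ^ m * cycMk n g = cycMk n g → k₂ ≤ m := by
    intro m hm hmeq
    have hd := L2 m hmeq
    have hne : ((X : Polynomial (ZMod 2)) ^ m - 1) ≠ 0 := by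
      have := monic_X_pow_sub_C (1 : ZMod 2) hm.ne'
      simpa using this.ne_zero
    have := Polynomial.natDegree_le_of_dvd hd hne
    rw [hdegh] at this
    have hdm : ((X : Polynomial (ZMod 2)) ^ m - 1).natDegree = m := by
      have := natDegree_X_pow_sub_C (n := m) (r := (1 : ZMod 2))
      simpa using this
    omega
  -- injectivity
  have inj : ∀ i j : Fin n, (cycMk n X) ^ (i : ℕ) * cycMk n g =
      (cycMk n X) ^ (j : ℕ) * cycMk n g → i = j := by
    have aux : ∀ i j : Fin n, (i : ℕ) ≤ (j : ℕ) →
        (cycMk n X) ^ (i : ℕ) * cycMk n g = (cycMk n X) ^ (j : ℕ) * cycMk n g → i = j := by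
      intro i j hij heq'
      rcases eq_or_lt_of_le hij with hlt | hlt
      · exact Fin.ext hlt
      exfalso
      -- first: x^(n - (j - i)) * g = g
      have h1 := congrArg (fun y => (cycMk n X) ^ (n - (j : ℕ)) * y) heq'
      simp only [← mul_assoc, ← pow_add] at h1
      have e1 : n - (j : ℕ) + (j : ℕ) = n := by omega
      rw [e1, hxn, one_mul] at h1
      have hb1 : k₂ ≤ n - (j : ℕ) + (i : ℕ) := L3 _ (by omega) h1
      -- second: x^(j - i) * g = g
      have h2 := congrArg (fun y => (cycMk n X) ^ (n - (i : ℕ)) * y) heq'.symm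
      simp only [← mul_assoc, ← pow_add] at h2
      have e2 : n - (i : ℕ) + (j : ℕ) = n + ((j : ℕ) - (i : ℕ)) := by omega
      have e3 : n - (i : ℕ) + (i : ℕ) = n := by omega
      rw [e2, e3, hxn, one_mul, pow_add, hxn, one_mul] at h2
      have hb2 : k₂ ≤ (j : ℕ) - (i : ℕ) := L3 _ (by omega) h2
      have hjn : (j : ℕ) < n := j.isLt
      omega
    intro i j heq'
    rcases le_total (i : ℕ) (j : ℕ) with hle | hle
    · exact aux i j hle heq'
    · exact (aux j i hle heq'.symm).symm
  refine ⟨?_, inj⟩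
  -- cardinality
  have hset : {y : CycRing n | ∃ a : ℕ, (cycMk n X) ^ a * cycMk n g = y} =
      Set.range (fun i : Fin n => (cycMk n X) ^ (i : ℕ) * cycMk n g) := by
    ext y
    constructor
    · rintro ⟨a, rfl⟩
      refine ⟨⟨a % n, Nat.mod_lt _ hn⟩, ?_⟩
      show (cycMk n X) ^ (a % n) * cycMk n g = (cycMk n X) ^ a * cycMk n g
      congr 1
      conv_rhs => rw [← Nat.div_add_mod a n]
      rw [pow_add, pow_mul, hxn, one_pow, one_mul]
    · rintro ⟨i, rfl⟩
      exact ⟨(i : ℕ), rfl⟩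
  rw [hset, Nat.card_range_of_injective inj, Nat.card_eq_fintype_card, Fintype.card_fin]
end

section
/- Let n = 2^m − 1 with m ≥ 5, and let d be an odd integer with 3 ≤ d ≤ 2^{⌈m/2⌉} − 1. Then the primitive narrow-sense BCH code of length n and designed distance d over F_2 has dimension exactly n − m(d−1)/2. -/
open Polynomial

set_option maxHeartbeats 1000000 in
/-- Evaluation of (the polynomial with) coefficient vector `v ∈ F₂ⁿ` at an
element `β` of `F_{2^m}`, as an `F₂`-linear map. -/
noncomputable def evalVec (m n : ℕ) (β : GaloisField 2 m) :
    (Fin n → ZMod 2) →ₗ[ZMod 2] GaloisField 2 m where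
  toFun v := ∑ i : Fin n, v i • β ^ (i : ℕ)
  map_add' a b := by
    simp only [Pi.add_apply, add_smul, Finset.sum_add_distrib]
  map_smul' c v := by
    simp only [Pi.smul_apply, smul_eq_mul, mul_smul, Finset.smul_sum, RingHom.id_apply]

/-- The primitive narrow-sense BCH code of length `n = 2^m − 1` and designed
distance `d` over `F₂`, relative to a primitive element `α` of `F_{2^m}`:
the cyclic code of all vectors whose polynomial vanishes at `α, α², …, α^(d−1)`. -/
noncomputable def BCHCode (m d : ℕ) (α : GaloisField 2 m) :
    Submodule (ZMod 2) (Fin (2 ^ m - 1) → ZMod 2) :=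
  ⨅ j ∈ Finset.Icc 1 (d - 1), LinearMap.ker (evalVec m (2 ^ m - 1) (α ^ j))

/-!
Evaluating at `α, α³, …, α^(d-2)` identifies `BCHCode m d α` with the kernel of an `F₂`-linear map
`F₂ⁿ → F_{2^m}^((d-1)/2)`: the conditions at even powers follow from those at odd ones because
`c(β²) = c(β)²` over `F₂`. The map is onto. Since the cyclotomic cosets `j·2^k mod n` of the odd
`j ≤ d - 2 < 2^⌈m/2⌉ - 1` have `m` elements and are pairwise disjoint, each `α^j` generates
`F_{2^m}` and no `α^j` is a root of the minimal polynomial of another `α^j'`; so any values can be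
prescribed at these points by a polynomial (Chinese remainder theorem), and reducing it modulo
`X^n - 1` gives a word of length `n`. Rank–nullity then gives the dimension `n - m(d-1)/2`.
-/

open IntermediateField

theorem mul_two_pow_eq_of_modEq {m t i j k : ℕ} (hi : i < 2 ^ t - 1) (hj : j < 2 ^ m - 1)
    (hkt : k + t ≤ m) (h : i * 2 ^ k ≡ j [MOD 2 ^ m - 1]) : i * 2 ^ k = j := by
  refine h.eq_of_lt_of_lt ?_ hj
  have hpow : 2 ^ t * 2 ^ k ≤ 2 ^ m := by
    rw [← pow_add]; exact Nat.pow_le_pow_right two_pos (by omega)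
  have hle : (i + 2) * 2 ^ k ≤ 2 ^ t * 2 ^ k := Nat.mul_le_mul_right _ (by omega)
  have := Nat.one_le_two_pow (n := k)
  rw [add_mul] at hle
  omega

theorem not_odd_mul_two_pow (a : ℕ) {s : ℕ} (hs : s ≠ 0) : ¬Odd (a * 2 ^ s) :=
  Nat.not_odd_iff_even.mpr ((Nat.even_pow.mpr ⟨even_two, hs⟩).mul_left a)

theorem eq_of_odd_mul_two_pow_modEq {m i j k : ℕ} (hi : Odd i) (hj : Odd j)
    (hi' : i < 2 ^ ((m + 1) / 2) - 1) (hj' : j < 2 ^ ((m + 1) / 2) - 1) (hk : k < m)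
    (h : i * 2 ^ k ≡ j [MOD 2 ^ m - 1]) : k = 0 ∧ i = j := by
  -- As `2 * t ≤ m + 1`, one of `i * 2 ^ k` and `j * 2 ^ (m - k)` stays below the modulus, so the
  -- congruence becomes an equation between an odd and an even number unless `k = 0`.
  set t := (m + 1) / 2
  have hsmall {a b s : ℕ} (ha : a < 2 ^ t - 1) (hb : b < 2 ^ t - 1) (hs : s + t ≤ m) :
      a * 2 ^ s ≡ b [MOD 2 ^ m - 1] → a * 2 ^ s = b :=
    mul_two_pow_eq_of_modEq ha (hb.trans_le (Nat.sub_le_sub_right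
      (Nat.pow_le_pow_right two_pos (by omega)) 1)) hs
  by_cases hkt : k + t ≤ m
  · have heq := hsmall hi' hj' hkt h
    obtain rfl | hk0 := Nat.eq_zero_or_pos k
    · simpa using heq
    · exact absurd (heq ▸ hj) (not_odd_mul_two_pow _ hk0.ne')
  · have hrot : j * 2 ^ (m - k) ≡ i [MOD 2 ^ m - 1] := calc
      j * 2 ^ (m - k) ≡ i * 2 ^ k * 2 ^ (m - k) [MOD 2 ^ m - 1] := (h.mul_right _).symm
      _ = i * 2 ^ m := by rw [mul_assoc, ← pow_add, Nat.add_sub_cancel' hk.le]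
      _ ≡ i * 1 [MOD 2 ^ m - 1] := (Nat.modEq_sub Nat.one_le_two_pow).mul_left i
      _ = i := mul_one i
    exact absurd (hsmall hj' hi' (by omega) hrot ▸ hi) (not_odd_mul_two_pow _ (by omega))

theorem eq_of_pow_pow_two_pow_eq {G : Type*} [Monoid G] {m i j k : ℕ} {α : G}
    (hα : orderOf α = 2 ^ m - 1) (hi : Odd i) (hj : Odd j)
    (hi' : i < 2 ^ ((m + 1) / 2) - 1) (hj' : j < 2 ^ ((m + 1) / 2) - 1) (hk : k < m)
    (h : (α ^ i) ^ 2 ^ k = α ^ j) : k = 0 ∧ i = j := by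
  have hfin : IsOfFinOrder α := orderOf_pos_iff.mp (hα ▸ Nat.sub_pos_of_lt (Nat.one_lt_two_pow
    (by omega)))
  rw [← pow_mul, hfin.pow_eq_pow_iff_modEq, hα] at h
  exact eq_of_odd_mul_two_pow_modEq hi hj hi' hj' hk h

section FiniteField

variable {K L : Type*} [Field K] [Fintype K] [Field L] [Finite L] [Algebra K L]

theorem exists_eq_pow_card_pow_of_aeval_minpoly_eq_zero {x y : L}
    (h : aeval y (minpoly K x) = 0) : ∃ k < Module.finrank K L, y = x ^ Fintype.card K ^ k := by
  have hx : IsIntegral K x := .of_finite K x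
  have hmin : minpoly K y = minpoly K x :=
    (minpoly.eq_of_irreducible_of_monic (minpoly.irreducible hx) h (minpoly.monic hx)).symm
  obtain ⟨σ, rfl⟩ := (Normal.minpoly_eq_iff_mem_orbit L).mp hmin
  obtain ⟨k, rfl⟩ := (FiniteField.bijective_frobeniusAlgEquivOfAlgebraic_pow K L).2 σ
  refine ⟨k, k.2, ?_⟩
  simp [AlgEquiv.smul_def, AlgEquiv.coe_pow, FiniteField.coe_frobeniusAlgEquivOfAlgebraic_iterate]

theorem aeval_surjective_of_pow_card_pow_ne {x : L}
    (hx : ∀ k, 0 < k → k < Module.finrank K L → x ^ Fintype.card K ^ k ≠ x) :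
    Function.Surjective (aeval (R := K) x) := by
  have : Fintype K⟮x⟯ := Fintype.ofFinite _
  set d := Module.finrank K K⟮x⟯
  have hfix : x ^ Fintype.card K ^ d = x := by
    have := FiniteField.pow_card (AdjoinSimple.gen K x)
    rw [Module.card_fintype (Module.finBasis K K⟮x⟯), Fintype.card_fin] at this
    exact congrArg Subtype.val this
  have hd : Module.finrank K L ≤ d := not_lt.mp fun hlt => hx d Module.finrank_pos hlt hfix
  have htop : K⟮x⟯ = ⊤ := eq_of_le_of_finrank_le le_top (by rwa [finrank_top'])
  have := adjoin_simple_toSubalgebra_of_isAlgebraic (IsIntegral.of_finite K x).isAlgebraic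
  rw [htop, top_toSubalgebra, Algebra.adjoin_singleton_eq_range_aeval] at this
  exact (AlgHom.range_eq_top _).mp this.symm

end FiniteField

theorem exists_aeval_eq_of_aeval_minpoly_ne_zero {F L ι : Type*} [Field F] [Field L]
    [Algebra F L] [Fintype ι] {β : ι → L} (hsurj : ∀ i, Function.Surjective (aeval (R := F) (β i)))
    (hβ : ∀ i k, i ≠ k → aeval (β i) (minpoly F (β k)) ≠ 0) (c : ι → L) :
    ∃ p : F[X], ∀ i, aeval (β i) p = c i := by
  classical
  let q i := ∏ k ∈ Finset.univ.erase i, minpoly F (β k)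
  have hq_ne i : aeval (β i) (q i) ≠ 0 := by
    simp only [q, map_prod, Finset.prod_ne_zero_iff, Finset.mem_erase]
    exact fun k hk => hβ i k (Ne.symm hk.1)
  have hq_eq i k (hik : i ≠ k) : aeval (β i) (q k) = 0 := by
    simp only [q, map_prod]
    exact Finset.prod_eq_zero (Finset.mem_erase.mpr ⟨hik, Finset.mem_univ i⟩) (minpoly.aeval F _)
  choose h hh using fun i => hsurj i (c i / aeval (β i) (q i))
  refine ⟨∑ k, h k * q k, fun i => ?_⟩
  rw [map_sum, Finset.sum_eq_single i (fun k _ hki => by rw [map_mul, hq_eq i k hki.symm, mul_zero])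
    (by simp), map_mul, hh, div_mul_cancel₀ _ (hq_ne i)]

theorem evalVec_sq {m n : ℕ} (x : GaloisField 2 m) (v : Fin n → ZMod 2) :
    evalVec m n (x ^ 2) v = evalVec m n x v ^ 2 := by
  have hfrob : ⇑(FiniteField.frobeniusAlgHom (ZMod 2) (GaloisField 2 m)) = (· ^ 2) := by
    rw [FiniteField.coe_frobeniusAlgHom, ZMod.card]
  have := map_sum (FiniteField.frobeniusAlgHom (ZMod 2) (GaloisField 2 m))
    (fun i : Fin n => v i • x ^ (i : ℕ)) Finset.univ
  simpa only [evalVec, LinearMap.coe_mk, AddHom.coe_mk, map_smul, map_pow, hfrob, ← pow_mul,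
    mul_comm 2] using this.symm

theorem evalVec_pow_two_pow {m n : ℕ} (x : GaloisField 2 m) (v : Fin n → ZMod 2) (a : ℕ) :
    evalVec m n (x ^ 2 ^ a) v = evalVec m n x v ^ 2 ^ a := by
  induction a with
  | zero => simp
  | succ a ih => rw [pow_succ, pow_mul, pow_mul, evalVec_sq, ih]

theorem evalVec_coeff {m n : ℕ} (x : GaloisField 2 m) {p : (ZMod 2)[X]} (hp : p.natDegree < n) :
    evalVec m n x (fun i => p.coeff i) = aeval x p := by
  rw [aeval_eq_sum_range' hp, ← Fin.sum_univ_eq_sum_range]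
  rfl

theorem evalVec_coeff_modByMonic {m n : ℕ} (hn : n ≠ 0) {x : GaloisField 2 m} (hx : x ^ n = 1)
    (p : (ZMod 2)[X]) : evalVec m n x (fun i => (p %ₘ (X ^ n - 1)).coeff i) = aeval x p := by
  have hmonic : (X ^ n - 1 : (ZMod 2)[X]).Monic := monic_X_pow_sub_C 1 hn
  have hdeg : (p %ₘ (X ^ n - 1)).natDegree < n := by
    have hdegX : (X ^ n - 1 : (ZMod 2)[X]).natDegree = n := by
      simpa using natDegree_X_pow_sub_C (n := n) (r := (1 : ZMod 2))
    refine (natDegree_modByMonic_lt p hmonic fun h => hn ?_).trans_eq hdegX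
    simpa [h] using hdegX.symm
  rw [evalVec_coeff x hdeg, aeval_modByMonic_eq_self_of_root (by simp [hx])]

noncomputable def oddSyndromes (m n r : ℕ) (α : GaloisField 2 m) :
    (Fin n → ZMod 2) →ₗ[ZMod 2] (Fin r → GaloisField 2 m) :=
  LinearMap.pi fun i => evalVec m n (α ^ (2 * (i : ℕ) + 1))

theorem BCHCode_eq_ker_oddSyndromes {m d : ℕ} (hd : Odd d) (α : GaloisField 2 m) :
    BCHCode m d α = LinearMap.ker (oddSyndromes m (2 ^ m - 1) ((d - 1) / 2) α) := by
  obtain ⟨r, rfl⟩ := hd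
  ext v
  simp only [BCHCode, oddSyndromes, Submodule.mem_iInf, LinearMap.mem_ker, Finset.mem_Icc,
    LinearMap.pi_apply, funext_iff, Pi.zero_apply]
  refine ⟨fun h i => h _ ⟨by omega, by omega⟩, fun h j ⟨hj1, hj2⟩ => ?_⟩
  obtain ⟨a, o, ⟨l, rfl⟩, rfl⟩ := Nat.exists_eq_two_pow_mul_odd (n := j) (by omega)
  have hl : l < (2 * r + 1 - 1) / 2 := by
    have := Nat.le_mul_of_pos_left (2 * l + 1) (Nat.two_pow_pos a)
    omega
  rw [pow_mul', evalVec_pow_two_pow, h ⟨l, hl⟩, zero_pow (by positivity)]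

theorem oddSyndromes_surjective {m d : ℕ} (hm : m ≠ 0) (hd_odd : Odd d)
    (hd : d ≤ 2 ^ ((m + 1) / 2) - 1) {α : GaloisField 2 m} (hα : orderOf α = 2 ^ m - 1) :
    Function.Surjective (oddSyndromes m (2 ^ m - 1) ((d - 1) / 2) α) := by
  have hcard : Fintype.card (ZMod 2) = 2 := ZMod.card 2
  have hrank : Module.finrank (ZMod 2) (GaloisField 2 m) = m := GaloisField.finrank 2 hm
  have hodd (i : Fin ((d - 1) / 2)) : Odd (2 * (i : ℕ) + 1) := odd_two_mul_add_one _
  have hsmall (i : Fin ((d - 1) / 2)) : 2 * (i : ℕ) + 1 < 2 ^ ((m + 1) / 2) - 1 := by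
    obtain ⟨k, rfl⟩ := hd_odd; omega
  have hsurj (i : Fin ((d - 1) / 2)) :
      Function.Surjective (aeval (R := ZMod 2) (α ^ (2 * (i : ℕ) + 1))) :=
    aeval_surjective_of_pow_card_pow_ne fun k hk0 hk h => hk0.ne' <|
      (eq_of_pow_pow_two_pow_eq hα (hodd i) (hodd i) (hsmall i) (hsmall i) (hk.trans_eq hrank)
        (by rwa [hcard] at h)).1
  have hβ (i k : Fin ((d - 1) / 2)) (hik : i ≠ k) :
      aeval (α ^ (2 * (i : ℕ) + 1)) (minpoly (ZMod 2) (α ^ (2 * (k : ℕ) + 1))) ≠ 0 := fun h => by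
    obtain ⟨s, hs, hpow⟩ := exists_eq_pow_card_pow_of_aeval_minpoly_eq_zero h
    have := (eq_of_pow_pow_two_pow_eq hα (hodd k) (hodd i) (hsmall k) (hsmall i)
      (hs.trans_eq hrank) (by rw [hpow, hcard])).2
    exact hik (Fin.ext (by omega)).symm
  intro c
  obtain ⟨p, hp⟩ := exists_aeval_eq_of_aeval_minpoly_ne_zero hsurj hβ c
  have hroot (j : ℕ) : (α ^ j) ^ (2 ^ m - 1) = 1 := by
    rw [← pow_mul, mul_comm, pow_mul, ← hα, pow_orderOf_eq_one, one_pow]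
  refine ⟨fun j => (p %ₘ (X ^ (2 ^ m - 1) - 1)).coeff j, funext fun i => ?_⟩
  rw [oddSyndromes, LinearMap.pi_apply, evalVec_coeff_modByMonic
    (Nat.sub_ne_zero_of_lt (Nat.one_lt_two_pow hm)) (hroot _), hp]

theorem stmt12_general (m d : ℕ) (hd_odd : Odd d)
    (hd : d ≤ 2 ^ ((m + 1) / 2) - 1)
    (α : GaloisField 2 m) (hα : orderOf α = 2 ^ m - 1) :
    Module.finrank (ZMod 2) (BCHCode m d α) = (2 ^ m - 1) - m * ((d - 1) / 2) := by
  have hm : m ≠ 0 := by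
    rintro rfl
    obtain ⟨k, rfl⟩ := hd_odd
    simp at hd
  have hrank :=
    LinearMap.finrank_range_add_finrank_ker (oddSyndromes m (2 ^ m - 1) ((d - 1) / 2) α)
  rw [LinearMap.range_eq_top.mpr (oddSyndromes_surjective hm hd_odd hd hα), finrank_top,
    Module.finrank_pi_fintype, Module.finrank_fin_fun, GaloisField.finrank 2 hm, Finset.sum_const,
    Finset.card_univ, Fintype.card_fin, smul_eq_mul] at hrank
  rw [BCHCode_eq_ker_oddSyndromes hd_odd, mul_comm m]
  omega

/-- Let `n = 2^m − 1` with `m ≥ 5` and let `d` be odd with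
`3 ≤ d ≤ 2^⌈m/2⌉ − 1`.  Then the primitive narrow-sense BCH code of length `n`
and designed distance `d` over `F₂` has dimension exactly `n − m(d−1)/2`. -/
theorem stmt12 (m d : ℕ) (hm : 5 ≤ m) (hd_odd : Odd d) (hd3 : 3 ≤ d)
    (hd : d ≤ 2 ^ ((m + 1) / 2) - 1)
    (α : GaloisField 2 m) (hα : orderOf α = 2 ^ m - 1) :
    Module.finrank (ZMod 2) (BCHCode m d α) = (2 ^ m - 1) - m * ((d - 1) / 2) :=
  stmt12_general m d hd_odd hd α hα
end

section
/- Let n = 2^m − 1 with m ≥ 2 and let d be an odd integer with 3 ≤ d ≤ 2^{⌈m/2⌉} − 1. Then the primitive narrow-sense binary BCH code of length n and designed distance d contains its dual code. -/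
open Polynomial

/-- Bound for the Steane condition. -/
lemma steane_bound_aux {m a b t : ℕ} (hm : 2 ≤ m) (ha1 : 1 ≤ a)
    (ha2 : a ≤ 2 ^ ((m + 1) / 2) - 2) (hb1 : 1 ≤ b) (hb2 : b ≤ 2 ^ ((m + 1) / 2) - 2)
    (ht : t ≤ m - (m + 1) / 2) : ¬ (2 ^ m - 1 ∣ a * 2 ^ t + b) := by
  intro hdvd
  set M := (m + 1) / 2 with hM
  have hA2 : 2 ≤ 2 ^ M := by
    calc 2 = 2 ^ 1 := rfl
    _ ≤ 2 ^ M := Nat.pow_le_pow_right (by norm_num) (by omega)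
  have h1 : 2 ^ t ≤ 2 ^ (m - M) := Nat.pow_le_pow_right (by norm_num) ht
  have h2 : a * 2 ^ t ≤ (2 ^ M - 2) * 2 ^ (m - M) := Nat.mul_le_mul ha2 h1
  have h3 : (2 ^ M - 2) * 2 ^ (m - M) + 2 * 2 ^ (m - M) = 2 ^ m := by
    rw [← add_mul, Nat.sub_add_cancel hA2, ← pow_add]
    congr 1
    omega
  have h4 : 2 ^ M ≤ 2 * 2 ^ (m - M) := by
    have h5 : 2 * 2 ^ (m - M) = 2 ^ (m - M + 1) := by rw [pow_succ]; ring
    rw [h5]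
    exact Nat.pow_le_pow_right (by norm_num) (by omega)
  have hsum : a * 2 ^ t + b + 2 ≤ 2 ^ m := by omega
  have hpos : 0 < a * 2 ^ t + b := by positivity
  have hle := Nat.le_of_dvd hpos hdvd
  have h2m : 4 ≤ 2 ^ m := by
    calc 4 = 2 ^ 2 := rfl
    _ ≤ 2 ^ m := Nat.pow_le_pow_right (by norm_num) hm
  omega

/-- The Steane condition: `j·2^s + k` is not divisible by `2^m − 1`. -/
lemma steane_key {m j k s : ℕ} (hm : 2 ≤ m) (hj1 : 1 ≤ j)
    (hj2 : j ≤ 2 ^ ((m + 1) / 2) - 2) (hk1 : 1 ≤ k) (hk2 : k ≤ 2 ^ ((m + 1) / 2) - 2)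
    (hs : s < m) : ¬ (2 ^ m - 1 ∣ j * 2 ^ s + k) := by
  by_cases hcase : s ≤ m - (m + 1) / 2
  · exact steane_bound_aux hm hj1 hj2 hk1 hk2 hcase
  · intro hdvd
    have hdvd2 : 2 ^ m - 1 ∣ (j * 2 ^ s + k) * 2 ^ (m - s) := hdvd.mul_right _
    have hrw : (j * 2 ^ s + k) * 2 ^ (m - s) = j * (2 ^ m - 1) + (k * 2 ^ (m - s) + j) := by
      have h1 : 2 ^ s * 2 ^ (m - s) = 2 ^ m := by rw [← pow_add]; congr 1; omega
      have h2 : 1 ≤ 2 ^ m := Nat.one_le_two_pow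
      calc (j * 2 ^ s + k) * 2 ^ (m - s) = j * (2 ^ s * 2 ^ (m - s)) + k * 2 ^ (m - s) := by ring
        _ = j * ((2 ^ m - 1) + 1) + k * 2 ^ (m - s) := by rw [h1]; congr 2; omega
        _ = j * (2 ^ m - 1) + (k * 2 ^ (m - s) + j) := by ring
    rw [hrw] at hdvd2
    have hdvd3 : 2 ^ m - 1 ∣ k * 2 ^ (m - s) + j :=
      (Nat.dvd_add_right (Dvd.intro_left j rfl)).mp hdvd2
    exact steane_bound_aux hm hk1 hk2 hj1 hj2 (by omega) hdvd3

/-- Geometric sum vanishes. -/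
lemma my_geom_sum_zero {K : Type*} [Field K] {β : K} {n : ℕ} (h1 : β ^ n = 1) (h2 : β ≠ 1) :
    ∑ i : Fin n, β ^ (i : ℕ) = 0 := by
  rw [Fin.sum_univ_eq_sum_range]
  have h := geom_sum_mul β n
  rw [h1, sub_self] at h
  rcases mul_eq_zero.mp h with h | h
  · exact h
  · exact absurd (sub_eq_zero.mp h) h2

/-- The absolute trace on `GF(2^m)`, as the sum of Frobenius powers,
    packaged as an `F₂`-linear endomorphism. -/
noncomputable def Tlin (m : ℕ) : GaloisField 2 m →ₗ[ZMod 2] GaloisField 2 m where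
  toFun x := ∑ s ∈ Finset.range m, x ^ 2 ^ s
  map_add' x y := by
    simp only [add_pow_char_pow, Finset.sum_add_distrib]
  map_smul' c x := by
    rcases (by decide : ∀ c : ZMod 2, c = 0 ∨ c = 1) c with rfl | rfl
    · simp only [zero_smul, RingHom.id_apply]
      apply Finset.sum_eq_zero
      intro s _
      exact zero_pow (by positivity)
    · simp

lemma Tlin_apply (m : ℕ) (x : GaloisField 2 m) :
    Tlin m x = ∑ s ∈ Finset.range m, x ^ 2 ^ s := rfl

lemma galois_pow_card (m : ℕ) (hm : m ≠ 0) (x : GaloisField 2 m) : x ^ 2 ^ m = x := by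
  haveI : Fintype (GaloisField 2 m) := Fintype.ofFinite _
  have hcard : Fintype.card (GaloisField 2 m) = 2 ^ m := by
    have := GaloisField.card (p := 2) (n := m) hm
    rwa [Nat.card_eq_fintype_card] at this
  have := FiniteField.pow_card x
  rwa [hcard] at this

lemma Tlin_sq (m : ℕ) (hm : m ≠ 0) (x : GaloisField 2 m) : (Tlin m x) ^ 2 = Tlin m x := by
  have hchar : (∑ s ∈ Finset.range m, x ^ 2 ^ s) ^ 2 = ∑ s ∈ Finset.range m, (x ^ 2 ^ s) ^ 2 :=
    sum_pow_char (p := 2) _ _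
  rw [Tlin_apply, hchar]
  have hstep : ∀ s, (x ^ 2 ^ s) ^ 2 = x ^ 2 ^ (s + 1) := by
    intro s
    rw [← pow_mul, pow_succ]
  simp only [hstep]
  have h1 := Finset.sum_range_succ' (fun s => x ^ 2 ^ s) m
  have h2 := Finset.sum_range_succ (fun s => x ^ 2 ^ s) m
  simp only [galois_pow_card m hm, pow_zero, pow_one] at h1 h2
  exact add_right_cancel (h1.symm.trans h2)

/-- `Tlin` takes values in the prime field `{0, 1}`. -/
lemma Tlin_mem (m : ℕ) (hm : m ≠ 0) (x : GaloisField 2 m) :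
    Tlin m x = 0 ∨ Tlin m x = 1 := by
  have h : Tlin m x * (Tlin m x - 1) = 0 := by
    rw [mul_sub, mul_one, ← sq, Tlin_sq m hm, sub_self]
  rcases mul_eq_zero.mp h with h | h
  · exact Or.inl h
  · exact Or.inr (sub_eq_zero.mp h)

/-- The trace to `F₂`, with values in `ZMod 2`. -/
noncomputable def tr2 (m : ℕ) (x : GaloisField 2 m) : ZMod 2 :=
  @ite _ (Tlin m x = 0) (Classical.dec _) 0 1

lemma algebraMap_tr2 (m : ℕ) (hm : m ≠ 0) (x : GaloisField 2 m) :
    algebraMap (ZMod 2) (GaloisField 2 m) (tr2 m x) = Tlin m x := by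
  rw [tr2]
  rcases Tlin_mem m hm x with h | h <;> rw [h] <;> simp

/-- The trace is not identically zero. -/
lemma Tlin_exists_ne_zero (m : ℕ) (hm : m ≠ 0) : ∃ y : GaloisField 2 m, Tlin m y ≠ 0 := by
  by_contra h
  push_neg at h
  haveI : Fintype (GaloisField 2 m) := Fintype.ofFinite _
  have hcard : Fintype.card (GaloisField 2 m) = 2 ^ m := by
    have := GaloisField.card (p := 2) (n := m) hm
    rwa [Nat.card_eq_fintype_card] at this
  set P : (GaloisField 2 m)[X] := ∑ s ∈ Finset.range m, X ^ 2 ^ s with hP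
  have heval : ∀ y : GaloisField 2 m, P.eval y = 0 := by
    intro y
    have : P.eval y = Tlin m y := by
      rw [hP, Polynomial.eval_finset_sum, Tlin_apply]
      simp
    rw [this, h]
  have hdeg : P.natDegree < Fintype.card (GaloisField 2 m) := by
    rw [hcard]
    have hle : P.natDegree ≤ 2 ^ (m - 1) := by
      apply Polynomial.natDegree_sum_le_of_forall_le
      intro s hs
      rw [Polynomial.natDegree_X_pow]
      have := Finset.mem_range.mp hs
      exact Nat.pow_le_pow_right (by norm_num) (by omega)
    have : (2:ℕ) ^ (m - 1) < 2 ^ m := Nat.pow_lt_pow_right (by norm_num) (by omega)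
    omega
  have hP0 : P = 0 :=
    Polynomial.eq_zero_of_natDegree_lt_card_of_eval_eq_zero P Function.injective_id
      (fun y => heval y) hdeg
  have hc1 : P.coeff 1 = 1 := by
    rw [hP, Polynomial.finset_sum_coeff]
    simp only [Polynomial.coeff_X_pow]
    rw [Finset.sum_eq_single_of_mem 0 (Finset.mem_range.mpr (by omega))]
    · simp
    · intro s _ hs0
      have : 2 ^ s ≠ 1 := by
        have : 2 ≤ 2 ^ s := by
          calc 2 = 2 ^ 1 := rfl
          _ ≤ 2 ^ s := Nat.pow_le_pow_right (by norm_num) (by omega)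
        omega
      simp only [ite_eq_right_iff]
      intro h1
      exact absurd h1.symm this
  rw [hP0] at hc1
  simp at hc1

lemma Tlin_nondeg (m : ℕ) (hm : m ≠ 0) {x : GaloisField 2 m} (hx : x ≠ 0) :
    ∃ c, Tlin m (c * x) ≠ 0 := by
  obtain ⟨y, hy⟩ := Tlin_exists_ne_zero m hm
  exact ⟨y * x⁻¹, by rwa [mul_assoc, inv_mul_cancel₀ hx, mul_one]⟩

/-- The dual code of a binary linear code `C ⊆ F₂ⁿ` with respect to the
standard inner product. -/
def dualCode {n : ℕ} (C : Submodule (ZMod 2) (Fin n → ZMod 2)) :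
    Submodule (ZMod 2) (Fin n → ZMod 2) where
  carrier := {v | ∀ c ∈ C, ∑ i, v i * c i = 0}
  add_mem' := by
    intro a b ha hb c hc
    simp only [Pi.add_apply, add_mul]
    rw [Finset.sum_add_distrib, ha c hc, hb c hc, add_zero]
  zero_mem' := by intro c hc; simp
  smul_mem' := by
    intro m v hv c hc
    simp only [Pi.smul_apply, smul_eq_mul, mul_assoc]
    rw [← Finset.mul_sum, hv c hc, mul_zero]

/-- Let `n = 2^m − 1` with `m ≥ 2` and let `d` be odd with
`3 ≤ d ≤ 2^⌈m/2⌉ − 1`.  Then the primitive narrow-sense binary BCH code of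
length `n` and designed distance `d` contains its dual code. -/
theorem stmt14 (m d : ℕ) (hm : 2 ≤ m) (hd_odd : Odd d) (hd3 : 3 ≤ d)
    (hd : d ≤ 2 ^ ((m + 1) / 2) - 1)
    (α : GaloisField 2 m) (hα : orderOf α = 2 ^ m - 1) :
    dualCode (BCHCode m d α) ≤ BCHCode m d α := by
  intro v hv
  have hv' : ∀ c ∈ BCHCode m d α, ∑ i, v i * c i = 0 := hv
  have hm0 : m ≠ 0 := by omega
  have hαn : α ^ (2 ^ m - 1) = 1 := by rw [← hα]; exact pow_orderOf_eq_one α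
  have hrange : ∀ j ∈ Finset.Icc 1 (d - 1), 1 ≤ j ∧ j ≤ 2 ^ ((m + 1) / 2) - 2 := by
    intro j hj
    obtain ⟨h1, h2⟩ := Finset.mem_Icc.mp hj
    have hM : 1 ≤ 2 ^ ((m + 1) / 2) := Nat.one_le_two_pow
    exact ⟨h1, by omega⟩
  -- the inner geometric sums vanish by the Steane condition
  have hβ : ∀ j ∈ Finset.Icc 1 (d - 1), ∀ k ∈ Finset.Icc 1 (d - 1), ∀ s < m,
      ∑ i : Fin (2 ^ m - 1), ((α ^ j) ^ 2 ^ s * α ^ k) ^ (i : ℕ) = 0 := by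
    intro j hj k hk s hs
    obtain ⟨hj1, hj2⟩ := hrange j hj
    obtain ⟨hk1, hk2⟩ := hrange k hk
    have hβeq : (α ^ j) ^ 2 ^ s * α ^ k = α ^ (j * 2 ^ s + k) := by
      rw [← pow_mul, ← pow_add]
    apply my_geom_sum_zero
    · rw [hβeq, ← pow_mul, mul_comm, pow_mul, hαn, one_pow]
    · rw [hβeq]
      intro hone
      exact steane_key hm hj1 hj2 hk1 hk2 hs (hα ▸ orderOf_dvd_of_pow_eq_one hone)
  -- words obtained from the trace are codewords
  have hcw : ∀ j ∈ Finset.Icc 1 (d - 1), ∀ c : GaloisField 2 m,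
      (fun i : Fin (2 ^ m - 1) => tr2 m (c * (α ^ j) ^ (i : ℕ))) ∈ BCHCode m d α := by
    intro j hj c
    simp only [BCHCode, Submodule.mem_iInf, LinearMap.mem_ker]
    intro k hk
    simp only [evalVec, LinearMap.coe_mk, AddHom.coe_mk]
    calc ∑ i : Fin (2 ^ m - 1), tr2 m (c * (α ^ j) ^ (i : ℕ)) • (α ^ k) ^ (i : ℕ)
        = ∑ i : Fin (2 ^ m - 1), ∑ s ∈ Finset.range m,
            c ^ 2 ^ s * ((α ^ j) ^ 2 ^ s * α ^ k) ^ (i : ℕ) := by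
          refine Finset.sum_congr rfl fun i _ => ?_
          rw [Algebra.smul_def, algebraMap_tr2 m hm0, Tlin_apply, Finset.sum_mul]
          exact Finset.sum_congr rfl fun s _ => by ring
      _ = ∑ s ∈ Finset.range m,
            c ^ 2 ^ s * ∑ i : Fin (2 ^ m - 1), ((α ^ j) ^ 2 ^ s * α ^ k) ^ (i : ℕ) := by
          rw [Finset.sum_comm]
          exact Finset.sum_congr rfl fun s _ => (Finset.mul_sum _ _ _).symm
      _ = 0 := Finset.sum_eq_zero fun s hs => by
          rw [hβ j hj k hk s (Finset.mem_range.mp hs), mul_zero]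
  -- main argument
  simp only [BCHCode, Submodule.mem_iInf, LinearMap.mem_ker]
  intro j hj
  simp only [evalVec, LinearMap.coe_mk, AddHom.coe_mk]
  by_contra hxne
  obtain ⟨c, hc⟩ := Tlin_nondeg m hm0 hxne
  apply hc
  have hcx : c * ∑ i : Fin (2 ^ m - 1), v i • (α ^ j) ^ (i : ℕ)
      = ∑ i : Fin (2 ^ m - 1), v i • (c * (α ^ j) ^ (i : ℕ)) := by
    rw [Finset.mul_sum]
    exact Finset.sum_congr rfl fun i _ => mul_smul_comm _ _ _
  rw [hcx, map_sum]
  have hterm : ∀ i : Fin (2 ^ m - 1), v i • Tlin m (c * (α ^ j) ^ (i : ℕ))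
      = algebraMap (ZMod 2) (GaloisField 2 m) (v i * tr2 m (c * (α ^ j) ^ (i : ℕ))) := by
    intro i
    rw [Algebra.smul_def, map_mul (algebraMap (ZMod 2) (GaloisField 2 m)),
      algebraMap_tr2 m hm0]
  simp only [map_smul, hterm]
  rw [← map_sum, hv' _ (hcw j hj c), map_zero]
end
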